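/- arXiv:1512.05139 — 3 statements merged into one kernel-verified Lean document; each statement's English description precedes it below -/
import Mathlib

section
/- Let T be an ergodic measure-preserving free G-action on (X,μ), H a countable discrete group, and α: R → H an ergodic cocycle of the T-orbit equivalence relation R (meaning the skew product action T(α)_g(x,h)=(T_g x, α(T_g x,x)h) on X×H is ergodic). Then the subrelation R_0 := {(x,y) ∈ R : α(x,y) = 1} is ergodic. -/
open MeasureTheory

/-!
The set `B = ⋃ g, T(α)_g⁻¹ (A × {1})` is the `T(α)`-saturation of `A × {1}`, so by ergodicity of
the skew product either `B` or its complement is null. Since `A` is `R₀`-saturated, the slice of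
`B` at `1` is exactly `A`, and a slice of a set in `X × H` has `μ`-measure at most the
`μ × count`-measure of the set.
-/

section Cocycle

variable {G H X : Type*} [Group G] [Group H] {T : G → X → X} {α : X → X → H}

theorem cocycle_apply_self (hTid : ∀ x, T 1 x = x)
    (hαcoc : ∀ x (g g' : G), α (T g x) x = α (T g x) (T g' x) * α (T g' x) x) (x : X) :
    α x x = 1 := by
  simpa only [hTid, left_eq_mul] using hαcoc x 1 1

theorem cocycle_apply_swap (hTid : ∀ x, T 1 x = x)
    (hαcoc : ∀ x (g g' : G), α (T g x) x = α (T g x) (T g' x) * α (T g' x) x) (x : X) (g : G) :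
    α x (T g x) = (α (T g x) x)⁻¹ := by
  have h := hαcoc x 1 g
  rw [hTid, cocycle_apply_self hTid hαcoc] at h
  exact eq_inv_of_mul_eq_one_left h.symm

theorem skewProduct_comp (hTmul : ∀ g g' x, T (g * g') x = T g (T g' x))
    (hαcoc : ∀ x (g g' : G), α (T g x) x = α (T g x) (T g' x) * α (T g' x) x)
    {Tα : G → X × H → X × H} (hTα : ∀ g p, Tα g p = (T g p.1, α (T g p.1) p.1 * p.2))
    (g g' : G) (p : X × H) :
    Tα g (Tα g' p) = Tα (g * g') p := by
  simp only [hTα]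
  rw [hαcoc p.1 (g * g') g', hTmul, mul_assoc]

theorem preimage_prodMk_one_iUnion_skewProduct_preimage (hTid : ∀ x, T 1 x = x)
    (hTmul : ∀ g g' x, T (g * g') x = T g (T g' x))
    (hαcoc : ∀ x (g g' : G), α (T g x) x = α (T g x) (T g' x) * α (T g' x) x)
    {Tα : G → X × H → X × H} (hTα : ∀ g p, Tα g p = (T g p.1, α (T g p.1) p.1 * p.2))
    {A : Set X} (hAsat : ∀ x ∈ A, ∀ g : G, α (T g x) x = 1 → T g x ∈ A) :
    (fun x => (x, (1 : H))) ⁻¹' ⋃ g, Tα g ⁻¹' (A ×ˢ {1}) = A := by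
  ext x
  simp only [Set.mem_preimage, Set.mem_iUnion, hTα, Set.mem_prod, Set.mem_singleton_iff, mul_one]
  constructor
  · rintro ⟨g, hgx, hα⟩
    have hback := hAsat (T g x) hgx g⁻¹ <| by
      rw [← hTmul, inv_mul_cancel, hTid, cocycle_apply_swap hTid hαcoc, hα, inv_one]
    rwa [← hTmul, inv_mul_cancel, hTid] at hback
  · intro hx
    exact ⟨1, by rwa [hTid], by rw [hTid, cocycle_apply_self hTid hαcoc]⟩

end Cocycle

theorem iUnion_preimage_invariant {G Y : Type*} [Group G] {f : G → Y → Y}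
    (hf : ∀ g g' y, f g (f g' y) = f (g * g') y) (S : Set Y) (g : G) :
    f g ⁻¹' ⋃ g', f g' ⁻¹' S = ⋃ g', f g' ⁻¹' S := by
  ext y
  simp only [Set.mem_preimage, Set.mem_iUnion, hf]
  constructor
  · rintro ⟨g', hg'⟩
    exact ⟨g' * g, hg'⟩
  · rintro ⟨g', hg'⟩
    exact ⟨g' * g⁻¹, by rwa [inv_mul_cancel_right]⟩

theorem measurable_skewProduct {X H : Type*} [MeasurableSpace X] [MeasurableSpace H] [Mul H]
    [Countable H] [MeasurableSingletonClass H] {f : X → X} {c : X → H}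
    (hf : Measurable f) (hc : Measurable c) :
    Measurable fun p : X × H => (f p.1, c p.1 * p.2) :=
  measurable_from_prod_countable_left fun h =>
    hf.prodMk ((Measurable.of_discrete (f := (· * h))).comp hc)

theorem measure_preimage_prodMk_le_prod_count {X H : Type*} [MeasurableSpace X]
    [MeasurableSpace H] [Countable H] [MeasurableSingletonClass H] (μ : Measure X)
    (B : Set (X × H)) (h : H) :
    μ ((fun x => (x, h)) ⁻¹' B) ≤ μ.prod Measure.count B := by
  calc μ ((fun x => (x, h)) ⁻¹' B)
      = μ.prod Measure.count (((fun x => (x, h)) ⁻¹' B) ×ˢ {h}) := by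
        rw [Measure.prod_prod, Measure.count_singleton, mul_one]
    _ ≤ μ.prod Measure.count B :=
        measure_mono <| by rintro ⟨x, _⟩ ⟨hx, rfl⟩; exact hx

theorem ergodic_subrelation_of_ergodic_cocycle_general
    {G H X : Type*} [Countable G] [Group G] [Countable H] [Group H]
    [MeasurableSpace X] [MeasurableSpace H] [MeasurableSingletonClass H]
    (μ : Measure X) [IsProbabilityMeasure μ]
    (T : G → X → X)
    (hTmeas : ∀ g, Measurable (T g))
    (hTid : ∀ x, T 1 x = x)
    (hTmul : ∀ g g' x, T (g * g') x = T g (T g' x))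
    (α : X → X → H)
    (hαmeas : ∀ g, Measurable (fun x => α (T g x) x))
    (hαcoc : ∀ x (g g' : G), α (T g x) x = α (T g x) (T g' x) * α (T g' x) x)
    -- the skew product extension T(α) on (X × H, μ × counting) and its ergodicity
    (Tα : G → X × H → X × H)
    (hTα : ∀ g p, Tα g p = (T g p.1, α (T g p.1) p.1 * p.2))
    (hαerg : ∀ A : Set (X × H), MeasurableSet A → (∀ g, Tα g ⁻¹' A = A) →
      (μ.prod Measure.count) A = 0 ∨ (μ.prod Measure.count) Aᶜ = 0) :
    -- conclusion: R₀ = {(x,y) ∈ R : α(x,y) = 1} is ergodic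
    ∀ A : Set X, MeasurableSet A →
      (∀ x ∈ A, ∀ g : G, α (T g x) x = 1 → T g x ∈ A) →
      μ A = 0 ∨ μ A = 1 := by
  intro A hA hAsat
  set B := ⋃ g, Tα g ⁻¹' (A ×ˢ {(1 : H)})
  have hTα_meas (g : G) : Measurable (Tα g) := by
    simpa only [← funext (hTα g)] using measurable_skewProduct (hTmeas g) (hαmeas g)
  have hB : MeasurableSet B :=
    .iUnion fun g => hTα_meas g (hA.prod (measurableSet_singleton 1))
  have hslice : (fun x => (x, (1 : H))) ⁻¹' B = A :=
    preimage_prodMk_one_iUnion_skewProduct_preimage hTid hTmul hαcoc hTα hAsat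
  rcases hαerg B hB (iUnion_preimage_invariant (skewProduct_comp hTmul hαcoc hTα) _)
    with hB0 | hBc0
  · left
    simpa only [hslice, nonpos_iff_eq_zero, hB0]
      using measure_preimage_prodMk_le_prod_count μ B 1
  · right
    rw [← prob_compl_eq_zero_iff hA, ← hslice, ← Set.preimage_compl]
    exact nonpos_iff_eq_zero.mp (hBc0 ▸ measure_preimage_prodMk_le_prod_count μ Bᶜ 1)

/-- If `α : R → H` is an ergodic cocycle of the orbit equivalence relation
of an ergodic measure-preserving free action `T` (i.e. the skew product
`T(α)_g(x,h) = (T_g x, α(T_g x, x) h)` on `X × H` is ergodic), then the subrelation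
`R₀ = {(x,y) ∈ R : α(x,y) = 1}` is ergodic. -/
theorem ergodic_subrelation_of_ergodic_cocycle
    {G H X : Type*} [Countable G] [Group G] [Countable H] [Group H]
    [MeasurableSpace X] [MeasurableSpace H] [MeasurableSingletonClass H]
    (μ : Measure X) [IsProbabilityMeasure μ]
    (T : G → X → X)
    (hTmeas : ∀ g, Measurable (T g))
    (hTbij : ∀ g, Function.Bijective (T g))
    (hTid : ∀ x, T 1 x = x)
    (hTmul : ∀ g g' x, T (g * g') x = T g (T g' x))
    (hTpres : ∀ g, MeasurePreserving (T g) μ μ)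
    (hTfree : ∀ᵐ x ∂μ, ∀ g : G, g ≠ 1 → T g x ≠ x)
    (hTerg : ∀ A : Set X, MeasurableSet A → (∀ g, T g ⁻¹' A = A) → μ A = 0 ∨ μ A = 1)
    (α : X → X → H)
    (hαmeas : ∀ g, Measurable (fun x => α (T g x) x))
    (hαcoc : ∀ x (g g' : G), α (T g x) x = α (T g x) (T g' x) * α (T g' x) x)
    -- the skew product extension T(α) on (X × H, μ × counting) and its ergodicity
    (Tα : G → X × H → X × H)
    (hTα : ∀ g p, Tα g p = (T g p.1, α (T g p.1) p.1 * p.2))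
    (hαerg : ∀ A : Set (X × H), MeasurableSet A → (∀ g, Tα g ⁻¹' A = A) →
      (μ.prod Measure.count) A = 0 ∨ (μ.prod Measure.count) Aᶜ = 0) :
    -- conclusion: R₀ = {(x,y) ∈ R : α(x,y) = 1} is ergodic
    ∀ A : Set X, MeasurableSet A →
      (∀ x ∈ A, ∀ g : G, α (T g x) x = 1 → T g x ∈ A) →
      μ A = 0 ∨ μ A = 1 :=
  ergodic_subrelation_of_ergodic_cocycle_general μ T hTmeas hTid hTmul α hαmeas hαcoc Tα hTα hαerg
end

section
/- Let T be an ergodic measure-preserving free G-action on (X,μ), α: R → H an ergodic cocycle into a countable discrete group H, and S an ergodic nonsingular H-action on (Y,ν). Then the skew product action T(α,S)_g(x,y) = (T_g x, S_{α(T_g x,x)} y) on (X×Y, μ×ν) is ergodic. -/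
/-!
Fix `y ∈ Y`. Pulling an invariant set `A ⊆ X × Y` back along the orbit map
`(x, h) ↦ (x, S_h y)` gives a set invariant under the skew product `T(α)` on `X × H`, so by
ergodicity of the cocycle its `x`-sections along the whole `H`-orbit of `y` are either all null
or all conull. The set of `y` of the first kind is `S`-invariant, hence null or conull by
ergodicity of `S`, and Fubini turns each alternative into `A` being null or conull.
-/

open MeasureTheory Set

namespace MeasureTheory.Measure

variable {X Y : Type*} [MeasurableSpace X] [MeasurableSpace Y] {μ : Measure X} [SFinite μ]

theorem measure_prod_null_symm {ν : Measure Y} [SFinite ν] {s : Set (X × Y)}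
    (hs : MeasurableSet s) : μ.prod ν s = 0 ↔ (fun y => μ ((·, y) ⁻¹' s)) =ᵐ[ν] 0 := by
  rw [prod_apply_symm hs, lintegral_eq_zero_iff (measurable_measure_prodMk_right hs)]

theorem prod_count_null_iff [Countable Y] [MeasurableSingletonClass Y] {s : Set (X × Y)}
    (hs : MeasurableSet s) : μ.prod count s = 0 ↔ ∀ y, μ ((·, y) ⁻¹' s) = 0 := by
  rw [measure_prod_null_symm hs, Filter.EventuallyEq, ae_count_iff]
  rfl

end MeasureTheory.Measure

theorem preimage_setOf_forall_apply_eq {H Y : Type*} [Group H] (S : H → Y → Y)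
    (hSmul : ∀ h h' y, S (h * h') y = S h (S h' y)) (p : Y → Prop) (h : H) :
    S h ⁻¹' {y | ∀ k, p (S k y)} = {y | ∀ k, p (S k y)} := by
  ext y
  simp only [mem_preimage, mem_ofPred_eq, ← hSmul]
  exact ⟨fun hy k => by simpa using hy (k * h⁻¹), fun hy k => hy (k * h)⟩

theorem sections_null_or_compl_null_of_cocycle_ergodic {G H X Y : Type*} [Countable H] [Group H]
    [MeasurableSpace X] [MeasurableSpace Y] [MeasurableSpace H] [MeasurableSingletonClass H]
    (μ : Measure X) [SFinite μ] (T : G → X → X) (α : X → X → H)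
    (Tα : G → X × H → X × H) (hTα : ∀ g p, Tα g p = (T g p.1, α (T g p.1) p.1 * p.2))
    (hαerg : ∀ B : Set (X × H), MeasurableSet B → (∀ g, Tα g ⁻¹' B = B) →
      μ.prod Measure.count B = 0 ∨ μ.prod Measure.count Bᶜ = 0)
    (S : H → Y → Y) (hSmul : ∀ h h' y, S (h * h') y = S h (S h' y))
    (P : G → X × Y → X × Y) (hP : ∀ g p, P g p = (T g p.1, S (α (T g p.1) p.1) p.2))
    {A : Set (X × Y)} (hA : MeasurableSet A) (hAinv : ∀ g, P g ⁻¹' A = A) (y : Y) :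
    (∀ h, μ ((·, S h y) ⁻¹' A) = 0) ∨ (∀ h, μ ((·, S h y) ⁻¹' Aᶜ) = 0) := by
  set orbitMap : X × H → X × Y := fun p => (p.1, S p.2 y)
  have horbitMap : Measurable orbitMap :=
    measurable_fst.prodMk ((Measurable.of_discrete (f := (S · y))).comp measurable_snd)
  have hB : MeasurableSet (orbitMap ⁻¹' A) := horbitMap hA
  have hintertwine g : orbitMap ∘ Tα g = P g ∘ orbitMap :=
    funext fun p => by simp [orbitMap, hTα, hP, hSmul]
  have hBinv g : Tα g ⁻¹' (orbitMap ⁻¹' A) = orbitMap ⁻¹' A := by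
    rw [← preimage_comp, hintertwine g, preimage_comp, hAinv g]
  have hB_dichotomy := hαerg _ hB hBinv
  rwa [Measure.prod_count_null_iff hB, Measure.prod_count_null_iff hB.compl] at hB_dichotomy

theorem skew_product_ergodic_general
    {G H X Y : Type*} [Countable H] [Group H]
    [MeasurableSpace X] [MeasurableSpace Y] [MeasurableSpace H]
    [MeasurableSingletonClass H]
    (μ : Measure X) [IsProbabilityMeasure μ]
    (ν : Measure Y) [IsProbabilityMeasure ν]
    (T : G → X → X)
    (α : X → X → H)
    -- the skew product extension T(α) on (X × H, μ × counting) is ergodic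
    (Tα : G → X × H → X × H)
    (hTα : ∀ g p, Tα g p = (T g p.1, α (T g p.1) p.1 * p.2))
    (hαerg : ∀ A : Set (X × H), MeasurableSet A → (∀ g, Tα g ⁻¹' A = A) →
      (μ.prod Measure.count) A = 0 ∨ (μ.prod Measure.count) Aᶜ = 0)
    -- S is an ergodic nonsingular H-action on (Y,ν)
    (S : H → Y → Y)
    (hSmeas : ∀ h, Measurable (S h))
    (hSid : ∀ y, S 1 y = y)
    (hSmul : ∀ h h' y, S (h * h') y = S h (S h' y))
    (hSerg : ∀ B : Set Y, MeasurableSet B → (∀ h, S h ⁻¹' B = B) → ν B = 0 ∨ ν B = 1)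
    -- the skew product action T(α,S)
    (P : G → X × Y → X × Y)
    (hP : ∀ g p, P g p = (T g p.1, S (α (T g p.1) p.1) p.2)) :
    ∀ A : Set (X × Y), MeasurableSet A → (∀ g, P g ⁻¹' A = A) →
      (μ.prod ν) A = 0 ∨ (μ.prod ν) A = 1 := by
  intro A hA hAinv
  have hsections :=
    sections_null_or_compl_null_of_cocycle_ergodic μ T α Tα hTα hαerg S hSmul P hP hA hAinv
  set Y₀ := {y | ∀ h, μ ((·, S h y) ⁻¹' A) = 0}
  have hY₀ : MeasurableSet Y₀ := by
    simp only [Y₀, ofPred_forall]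
    exact .iInter fun h =>
      (measurable_measure_prodMk_right hA).comp (hSmeas h) (measurableSet_singleton 0)
  have hY₀inv := preimage_setOf_forall_apply_eq S hSmul (fun z => μ ((·, z) ⁻¹' A) = 0)
  rcases hSerg Y₀ hY₀ hY₀inv with hnull | hfull
  · right
    rw [← prob_compl_eq_zero_iff hA, Measure.measure_prod_null_symm hA.compl]
    filter_upwards [measure_eq_zero_iff_ae_notMem.1 hnull] with y hy
    simpa [hSid] using (hsections y).resolve_left hy 1
  · left
    rw [Measure.measure_prod_null_symm hA]
    filter_upwards [(ae_mem_iff_measure_eq hY₀.nullMeasurableSet).2 (by simpa using hfull)]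
      with y hy
    simpa [hSid] using hy 1

/-- If `T` is an ergodic measure-preserving free `G`-action, `α` an ergodic
cocycle with values in a countable group `H`, and `S` an ergodic nonsingular `H`-action,
then the skew product `T(α,S)_g(x,y) = (T_g x, S_{α(T_g x,x)} y)` is ergodic. -/
theorem skew_product_ergodic
    {G H X Y : Type*} [Countable G] [Group G] [Countable H] [Group H]
    [MeasurableSpace X] [MeasurableSpace Y] [MeasurableSpace H]
    [MeasurableSingletonClass H]
    (μ : Measure X) [IsProbabilityMeasure μ] [NullSingletonClass μ]
    (ν : Measure Y) [IsProbabilityMeasure ν]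
    (T : G → X → X)
    (hTmeas : ∀ g, Measurable (T g))
    (hTbij : ∀ g, Function.Bijective (T g))
    (hTid : ∀ x, T 1 x = x)
    (hTmul : ∀ g g' x, T (g * g') x = T g (T g' x))
    (hTpres : ∀ g, MeasurePreserving (T g) μ μ)
    (hTfree : ∀ᵐ x ∂μ, ∀ g : G, g ≠ 1 → T g x ≠ x)
    (hTerg : ∀ A : Set X, MeasurableSet A → (∀ g, T g ⁻¹' A = A) → μ A = 0 ∨ μ A = 1)
    (α : X → X → H)
    (hαmeas : ∀ g, Measurable (fun x => α (T g x) x))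
    (hαcoc : ∀ x (g g' : G), α (T g x) x = α (T g x) (T g' x) * α (T g' x) x)
    -- the skew product extension T(α) on (X × H, μ × counting) is ergodic
    (Tα : G → X × H → X × H)
    (hTα : ∀ g p, Tα g p = (T g p.1, α (T g p.1) p.1 * p.2))
    (hαerg : ∀ A : Set (X × H), MeasurableSet A → (∀ g, Tα g ⁻¹' A = A) →
      (μ.prod Measure.count) A = 0 ∨ (μ.prod Measure.count) Aᶜ = 0)
    -- S is an ergodic nonsingular H-action on (Y,ν)
    (S : H → Y → Y)
    (hSmeas : ∀ h, Measurable (S h))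
    (hSbij : ∀ h, Function.Bijective (S h))
    (hSid : ∀ y, S 1 y = y)
    (hSmul : ∀ h h' y, S (h * h') y = S h (S h' y))
    (hSns : ∀ h, ν.map (S h) ≪ ν ∧ ν ≪ ν.map (S h))
    (hSerg : ∀ B : Set Y, MeasurableSet B → (∀ h, S h ⁻¹' B = B) → ν B = 0 ∨ ν B = 1)
    -- the skew product action T(α,S)
    (P : G → X × Y → X × Y)
    (hP : ∀ g p, P g p = (T g p.1, S (α (T g p.1) p.1) p.2)) :
    ∀ A : Set (X × Y), MeasurableSet A → (∀ g, P g ⁻¹' A = A) →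
      (μ.prod ν) A = 0 ∨ (μ.prod ν) A = 1 :=
  skew_product_ergodic_general μ ν T α Tα hTα hαerg S hSmeas hSid hSmul hSerg P hP
end

section
/- Let ν_n and ν'_n be probabilities on ℤ/2ℤ that agree for all n ≠ n_0, with all values strictly positive except possibly ν'_{n_0}(0) which may vanish only in a limit; specifically ν^θ_{n_0} = θ ν_{n_0} + (1-θ)δ_1 for θ ∈ (0,1] and ν^θ_n = ν_n otherwise. Then for every probability measure ξ on F = ⊕_ℕ ℤ/2ℤ, h_ξ(S, ν) − h_ξ(S, ν^θ) = ξ({f ∈ F : f(n_0) ≠ 0}) · (Φ(ν_{n_0}(0)) − Φ(ν^θ_{n_0}(0))), where Φ(t) = (1−2t)·log((1−t)/t) for t ∈ (0,1). -/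
/-!
Translating a product measure `μ = ⊗ pᵢ` on `ι → G` by a finitely supported `f` multiplies it
by the density `∏_{i ∈ supp f} pᵢ(yᵢ - fᵢ) / pᵢ(yᵢ)`: both measures give the same mass to every
cylinder that fixes the coordinates in `supp f`, and additivity over the values of one free
coordinate propagates this to all cylinders, which determine a finite measure. The integral of
the log-density is then a sum over `supp f` of one-coordinate terms, equal to `-Φ(ν_i(0))` for
marginals on `ZMod 2`; since `ν` and `ν^θ` differ only at `n₀`, so do these sums.
-/

open MeasureTheory Finset Function

namespace MeasureTheory

variable {ι α : Type*}

def pointCylinder (s : Finset ι) (v : ι → α) : Set (ι → α) := {y | ∀ i ∈ s, y i = v i}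

theorem pointCylinder_empty (v : ι → α) : pointCylinder ∅ v = Set.univ := by
  ext; simp [pointCylinder]

theorem pointCylinder_inter_eq [DecidableEq ι] {s t : Finset ι} {v w y₀ : ι → α}
    (h₁ : y₀ ∈ pointCylinder s v) (h₂ : y₀ ∈ pointCylinder t w) :
    pointCylinder s v ∩ pointCylinder t w = pointCylinder (s ∪ t) y₀ := by
  ext y
  simp only [pointCylinder, Set.mem_inter_iff, Set.mem_ofPred_eq, mem_union, or_imp, forall_and]
  refine and_congr (forall₂_congr fun i hi => ?_) (forall₂_congr fun i hi => ?_)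
  · rw [h₁ i hi]
  · rw [h₂ i hi]

theorem isPiSystem_pointCylinders :
    IsPiSystem {S : Set (ι → α) | ∃ s v, S = pointCylinder s v} := by
  classical
  rintro _ ⟨s, v, rfl⟩ _ ⟨t, w, rfl⟩ ⟨y₀, h₁, h₂⟩
  exact ⟨s ∪ t, y₀, pointCylinder_inter_eq h₁ h₂⟩

theorem pointCylinder_eq_iUnion_update [DecidableEq ι] {s : Finset ι} {i : ι} (hi : i ∉ s)
    (v : ι → α) :
    pointCylinder s v = ⋃ c, pointCylinder (insert i s) (update v i c) := by
  ext y
  simp only [pointCylinder, Set.mem_iUnion, Set.mem_ofPred_eq, forall_mem_insert,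
    update_self, exists_eq_left']
  exact forall₂_congr fun j hj => by rw [update_of_ne (ne_of_mem_of_not_mem hj hi)]

theorem pairwise_disjoint_pointCylinder_update [DecidableEq ι] (s : Finset ι) (i : ι)
    (v : ι → α) :
    Pairwise (Disjoint on fun c => pointCylinder (insert i s) (update v i c)) := by
  intro c d hcd
  refine Set.disjoint_left.2 fun y hc hd => hcd ?_
  simpa using (hc i (mem_insert_self i s)).symm.trans (hd i (mem_insert_self i s))

variable [MeasurableSpace α] [MeasurableSingletonClass α]

theorem measurableSet_pointCylinder (s : Finset ι) (v : ι → α) :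
    MeasurableSet (pointCylinder s v) :=
  MeasurableSet.pi s.countable_toSet fun i _ => measurableSet_singleton (v i)

theorem generateFrom_pointCylinders [Countable α] :
    MeasurableSpace.generateFrom {S : Set (ι → α) | ∃ s v, S = pointCylinder s v}
      = MeasurableSpace.pi := by
  refine le_antisymm (MeasurableSpace.generateFrom_le ?_) ?_
  · rintro _ ⟨s, v, rfl⟩
    exact measurableSet_pointCylinder s v
  · refine iSup_le fun i => Measurable.comap_le ?_
    exact @measurable_to_countable' _ _ _ _ (MeasurableSpace.generateFrom _) _ fun c =>
      MeasurableSpace.measurableSet_generateFrom ⟨{i}, fun _ => c, by ext; simp [pointCylinder]⟩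

theorem Measure.ext_of_pointCylinder [Countable α] [Nonempty α] {μ ν : Measure (ι → α)}
    [IsFiniteMeasure μ] (h : ∀ s v, μ (pointCylinder s v) = ν (pointCylinder s v)) : μ = ν :=
  ext_of_generate_finite _ generateFrom_pointCylinders.symm isPiSystem_pointCylinders
    (by rintro _ ⟨s, v, rfl⟩; exact h s v)
    (by rw [← pointCylinder_empty (Classical.arbitrary _)]; exact h _ _)

theorem measure_pointCylinder_eq_sum [Fintype α] [DecidableEq ι] (μ : Measure (ι → α))
    {s : Finset ι} {i : ι} (hi : i ∉ s) (v : ι → α) :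
    μ (pointCylinder s v) = ∑ c, μ (pointCylinder (insert i s) (update v i c)) := by
  rw [pointCylinder_eq_iUnion_update hi,
    measure_iUnion (pairwise_disjoint_pointCylinder_update s i v)
      fun c => measurableSet_pointCylinder _ _, tsum_fintype]

theorem measure_pointCylinder_eq_of_superset [Fintype α] {μ ν : Measure (ι → α)} (t : Finset ι)
    (h : ∀ s v, t ⊆ s → μ (pointCylinder s v) = ν (pointCylinder s v)) (s : Finset ι)
    (v : ι → α) : μ (pointCylinder s v) = ν (pointCylinder s v) := by
  classical
  suffices ∀ u : Finset ι, ∀ s v, t ⊆ u ∪ s → μ (pointCylinder s v) = ν (pointCylinder s v) from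
    this t s v subset_union_left
  intro u
  induction u using Finset.induction_on with
  | empty => simpa using h
  | insert i u _ ih =>
    intro s v hts
    by_cases hi : i ∈ s
    · exact ih s v (by rwa [insert_union, insert_eq_of_mem (mem_union_right _ hi)] at hts)
    · rw [measure_pointCylinder_eq_sum μ hi, measure_pointCylinder_eq_sum ν hi]
      exact sum_congr rfl fun c _ => ih _ _ (by rwa [union_insert, ← insert_union])

variable {G : Type*} {p : ι → G → ℝ}

section

variable [MeasurableSpace G] [DiscreteMeasurableSpace G]

def IsProductMeasure (μ : Measure (ι → G)) (p : ι → G → ℝ) : Prop :=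
  ∀ s v, μ (pointCylinder s v) = ∏ i ∈ s, ENNReal.ofReal (p i (v i))

theorem IsProductMeasure.integral_comp_eval [Fintype G] {μ : Measure (ι → G)}
    [IsFiniteMeasure μ] (hμ : IsProductMeasure μ p) (hp : ∀ i c, 0 ≤ p i c) (i : ι) (r : G → ℝ) :
    ∫ y, r (y i) ∂μ = ∑ c, p i c * r c := by
  rw [← integral_map (measurable_pi_apply i).aemeasurable
    Measurable.of_discrete.aestronglyMeasurable, integral_fintype .of_finite]
  refine sum_congr rfl fun c _ => ?_
  have hpre : (fun y : ι → G => y i) ⁻¹' {c} = pointCylinder {i} fun _ => c := by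
    ext; simp [pointCylinder]
  rw [smul_eq_mul, measureReal_def, Measure.map_apply (measurable_pi_apply i)
    (measurableSet_singleton c), hpre, hμ, prod_singleton, ENNReal.toReal_ofReal (hp i c)]

end

variable [AddGroup G]

noncomputable def translateDensity (p : ι → G → ℝ) (f : ι →₀ G) (y : ι → G) : ℝ :=
  ∏ i ∈ f.support, p i (y i - f i) / p i (y i)

theorem translateDensity_pos (hp : ∀ i c, 0 < p i c) (f : ι →₀ G) (y : ι → G) :
    0 < translateDensity p f y :=
  prod_pos fun _ _ => div_pos (hp _ _) (hp _ _)

variable [MeasurableSpace G] [DiscreteMeasurableSpace G]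

theorem measurable_translateDensity (f : ι →₀ G) : Measurable (translateDensity p f) :=
  Finset.measurable_prod _ fun i _ =>
    (Measurable.of_discrete (f := fun c => p i (c - f i) / p i c)).comp (measurable_pi_apply i)

theorem measurable_add_const_pi (f : ι → G) : Measurable fun (y : ι → G) i => y i + f i :=
  measurable_pi_lambda _ fun i =>
    (Measurable.of_discrete (f := fun c => c + f i)).comp (measurable_pi_apply i)

namespace IsProductMeasure

variable {μ : Measure (ι → G)}

theorem map_add_const (hμ : IsProductMeasure μ p) (f : ι → G) :
    IsProductMeasure (μ.map fun y i => y i + f i) fun i c => p i (c - f i) := by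
  intro s v
  have hpre : (fun (y : ι → G) i => y i + f i) ⁻¹' pointCylinder s v
      = pointCylinder s fun i => v i - f i := by
    ext y; simp [pointCylinder, eq_sub_iff_add_eq]
  rw [Measure.map_apply (measurable_add_const_pi f) (measurableSet_pointCylinder s v), hpre, hμ]

theorem setLIntegral_translateDensity (hμ : IsProductMeasure μ p) (hp : ∀ i c, 0 < p i c)
    (f : ι →₀ G) {s : Finset ι} (hs : f.support ⊆ s) (v : ι → G) :
    ∫⁻ y in pointCylinder s v, ENNReal.ofReal (translateDensity p f y) ∂μ
      = ∏ i ∈ s, ENNReal.ofReal (p i (v i - f i)) := by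
  have hconst : ∀ y ∈ pointCylinder s v, translateDensity p f y = translateDensity p f v :=
    fun y hy => prod_congr rfl fun i hi => by rw [hy i (hs hi)]
  have hdensity : translateDensity p f v = ∏ i ∈ s, p i (v i - f i) / p i (v i) :=
    prod_subset hs fun i _ hi => by
      rw [Finsupp.notMem_support_iff.1 hi, sub_zero, div_self (hp i _).ne']
  rw [setLIntegral_congr_fun (measurableSet_pointCylinder s v) fun y hy => by rw [hconst y hy],
    setLIntegral_const, hμ, hdensity, ← ENNReal.ofReal_prod_of_nonneg fun i _ => (hp i _).le,
    ← ENNReal.ofReal_prod_of_nonneg fun i _ => (hp i _).le,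
    ← ENNReal.ofReal_mul (prod_nonneg fun i _ => (div_pos (hp _ _) (hp _ _)).le),
    ← prod_mul_distrib]
  congr 1
  exact prod_congr rfl fun i _ => div_mul_cancel₀ _ (hp i _).ne'

variable [Fintype G]

theorem map_add_const_eq_withDensity [IsFiniteMeasure μ] (hμ : IsProductMeasure μ p)
    (hp : ∀ i c, 0 < p i c) (f : ι →₀ G) :
    μ.map (fun y i => y i + f i)
      = μ.withDensity fun y => ENNReal.ofReal (translateDensity p f y) := by
  refine Measure.ext_of_pointCylinder
    (measure_pointCylinder_eq_of_superset f.support fun s v hs => ?_)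
  rw [hμ.map_add_const f s v, withDensity_apply _ (measurableSet_pointCylinder s v),
    hμ.setLIntegral_translateDensity hp f hs]

theorem integral_log_rnDeriv_map_add_const [IsFiniteMeasure μ] (hμ : IsProductMeasure μ p)
    (hp : ∀ i c, 0 < p i c) (f : ι →₀ G) :
    ∫ y, Real.log ((μ.map fun y i => y i + f i).rnDeriv μ y).toReal ∂μ
      = ∑ i ∈ f.support, ∑ c, p i c * (Real.log (p i (c - f i)) - Real.log (p i c)) := by
  have hrn : (μ.map fun y i => y i + f i).rnDeriv μ
      =ᵐ[μ] fun y => ENNReal.ofReal (translateDensity p f y) := by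
    rw [hμ.map_add_const_eq_withDensity hp f]
    exact Measure.rnDeriv_withDensity μ (measurable_translateDensity f).ennreal_ofReal
  have hlog (y : ι → G) : Real.log (translateDensity p f y)
      = ∑ i ∈ f.support, (Real.log (p i (y i - f i)) - Real.log (p i (y i))) := by
    rw [translateDensity, Real.log_prod fun i _ => (div_pos (hp _ _) (hp _ _)).ne']
    exact sum_congr rfl fun i _ => Real.log_div (hp _ _).ne' (hp _ _).ne'
  calc ∫ y, Real.log ((μ.map fun y i => y i + f i).rnDeriv μ y).toReal ∂μ
      = ∫ y, Real.log (translateDensity p f y) ∂μ := integral_congr_ae <| by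
        filter_upwards [hrn] with y hy
        rw [hy, ENNReal.toReal_ofReal (translateDensity_pos hp f y).le]
    _ = _ := by
      simp only [hlog]
      rw [integral_finsetSum]
      · exact sum_congr rfl fun i _ => hμ.integral_comp_eval (fun i c => (hp i c).le) i
          fun c => Real.log (p i (c - f i)) - Real.log (p i c)
      · exact fun i _ => (Integrable.of_finite
          (f := fun c => Real.log (p i (c - f i)) - Real.log (p i c))).comp_measurable
            (measurable_pi_apply i)

end IsProductMeasure

end MeasureTheory

theorem Finset.sum_comp_sub_sum_comp_update {ι α M : Type*} [DecidableEq ι] [AddCommGroup M]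
    (s : Finset ι) (g : α → M) (a : ι → α) (i₀ : ι) (x : α) :
    ∑ i ∈ s, g (a i) - ∑ i ∈ s, g (update a i₀ x i)
      = if i₀ ∈ s then g (a i₀) - g x else 0 := by
  simp only [apply_update (fun _ => g)]
  split_ifs with h
  · rw [sum_update_of_mem h, ← add_sum_erase s _ h, sdiff_singleton_eq_erase]
    abel
  · rw [sum_update_of_notMem h, sub_self]

/-- The paper's `Φ`: the Kullback–Leibler divergence of the law `(t, 1 - t)` on `ZMod 2` from
its flip `(1 - t, t)`. -/
noncomputable def flipDivergence (t : ℝ) : ℝ := (1 - 2 * t) * Real.log ((1 - t) / t)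

def bernoulliWeights {ι : Type*} (b : ι → ℝ) (i : ι) (c : ZMod 2) : ℝ :=
  if c = 0 then b i else 1 - b i

theorem integral_log_rnDeriv_map_add_const_bernoulli {ι : Type*} {b : ι → ℝ}
    (hb0 : ∀ i, 0 < b i) (hb1 : ∀ i, b i < 1) {μ : Measure (ι → ZMod 2)} [IsFiniteMeasure μ]
    (hμ : IsProductMeasure μ (bernoulliWeights b)) (f : ι →₀ ZMod 2) :
    ∫ y, Real.log ((μ.map fun y i => y i + f i).rnDeriv μ y).toReal ∂μ
      = -∑ i ∈ f.support, flipDivergence (b i) := by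
  have hp (i : ι) (c : ZMod 2) : 0 < bernoulliWeights b i c := by
    unfold bernoulliWeights; split_ifs
    · exact hb0 i
    · exact sub_pos.2 (hb1 i)
  rw [hμ.integral_log_rnDeriv_map_add_const hp, ← sum_neg_distrib]
  refine sum_congr rfl fun i hi => ?_
  have hfi : f i = 1 := (by decide : ∀ c : ZMod 2, c ≠ 0 → c = 1) _ (Finsupp.mem_support_iff.1 hi)
  rw [hfi, show (univ : Finset (ZMod 2)) = {0, 1} from rfl, sum_pair zero_ne_one]
  simp only [bernoulliWeights, ↓reduceIte, zero_sub, ZMod.neg_eq_self_mod_two, one_ne_zero,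
    sub_self, flipDivergence, Real.log_div (sub_pos.2 (hb1 i)).ne' (hb0 i).ne']
  ring

theorem entropy_difference_of_modified_marginal_general
    (a : ℕ → ℝ) (ha0 : ∀ n, 0 < a n) (ha1 : ∀ n, a n < 1)
    (n₀ : ℕ) (θ : ℝ) (hθ0 : 0 < θ) (hθ1 : θ ≤ 1)
    (ν νθ : Measure (ℕ → ZMod 2)) [IsProbabilityMeasure ν] [IsProbabilityMeasure νθ]
    -- ν = ⊗ ν_n with ν_n({0}) = a n, ν_n({1}) = 1 - a n
    (hν : ∀ (s : Finset ℕ) (v : ℕ → ZMod 2),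
      ν {y | ∀ n ∈ s, y n = v n}
        = ∏ n ∈ s, ENNReal.ofReal (if v n = 0 then a n else 1 - a n))
    -- νθ = ⊗ ν^θ_n with ν^θ_n = ν_n for n ≠ n₀ and ν^θ_{n₀} = θ ν_{n₀} + (1-θ) δ₁
    (hνθ : ∀ (s : Finset ℕ) (v : ℕ → ZMod 2),
      νθ {y | ∀ n ∈ s, y n = v n}
        = ∏ n ∈ s, ENNReal.ofReal
            (if n = n₀ then (if v n = 0 then θ * a n else 1 - θ * a n)
             else (if v n = 0 then a n else 1 - a n)))
    (ξ : (ℕ →₀ ZMod 2) → ℝ)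
    -- the entropies are well defined (summability of the defining series)
    (hsum : Summable (fun f : ℕ →₀ ZMod 2 => ξ f *
      ∫ y, Real.log ((ν.map (fun y n => y n + f n)).rnDeriv ν y).toReal ∂ν))
    (hsumθ : Summable (fun f : ℕ →₀ ZMod 2 => ξ f *
      ∫ y, Real.log ((νθ.map (fun y n => y n + f n)).rnDeriv νθ y).toReal ∂νθ)) :
    (-∑' f : ℕ →₀ ZMod 2, ξ f *
        ∫ y, Real.log ((ν.map (fun y n => y n + f n)).rnDeriv ν y).toReal ∂ν)
      - (-∑' f : ℕ →₀ ZMod 2, ξ f *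
        ∫ y, Real.log ((νθ.map (fun y n => y n + f n)).rnDeriv νθ y).toReal ∂νθ)
      = (∑' f : ℕ →₀ ZMod 2, if f n₀ ≠ 0 then ξ f else 0) *
          ((1 - 2 * a n₀) * Real.log ((1 - a n₀) / a n₀)
            - (1 - 2 * (θ * a n₀)) * Real.log ((1 - θ * a n₀) / (θ * a n₀))) := by
  set b := update a n₀ (θ * a n₀)
  have hb0 (n : ℕ) : 0 < b n := by
    rcases eq_or_ne n n₀ with rfl | h
    · simpa [b] using mul_pos hθ0 (ha0 n)
    · simpa [b, h] using ha0 n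
  have hb1 (n : ℕ) : b n < 1 := by
    rcases eq_or_ne n n₀ with rfl | h
    · simpa [b] using (mul_le_of_le_one_left (ha0 n).le hθ1).trans_lt (ha1 n)
    · simpa [b, h] using ha1 n
  have hνb : IsProductMeasure νθ (bernoulliWeights b) := fun s v =>
    (hνθ s v).trans <| prod_congr rfl fun n _ => by
      by_cases h : n = n₀ <;> simp [b, bernoulliWeights, h]
  have hterm (f : ℕ →₀ ZMod 2) :
      ξ f * -∑ n ∈ f.support, flipDivergence (b n) - ξ f * -∑ n ∈ f.support, flipDivergence (a n)
        = (if f n₀ ≠ 0 then ξ f else 0) * (flipDivergence (a n₀) - flipDivergence (θ * a n₀)) := by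
    rw [mul_neg, mul_neg, neg_sub_neg, ← mul_sub, sum_comp_sub_sum_comp_update]
    simp only [Finsupp.mem_support_iff]
    split_ifs <;> simp
  simp only [integral_log_rnDeriv_map_add_const_bernoulli ha0 ha1 hν,
    integral_log_rnDeriv_map_add_const_bernoulli hb0 hb1 hνb] at hsum hsumθ ⊢
  rw [neg_sub_neg, ← hsumθ.tsum_sub hsum, tsum_congr hterm, tsum_mul_right]
  rfl

/-- Modifying one coordinate marginal `ν_{n₀}` into
`ν^θ_{n₀} = θ ν_{n₀} + (1-θ) δ₁` changes the entropy of the translation action of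
`F = ⊕_ℕ ℤ/2ℤ` by `ξ({f : f(n₀) ≠ 0}) · (Φ(ν_{n₀}(0)) − Φ(ν^θ_{n₀}(0)))`, where
`Φ(t) = (1−2t) log((1−t)/t)`. Here `a n = ν_n(0)` and `ν^θ_{n₀}(0) = θ · a n₀`. -/
theorem entropy_difference_of_modified_marginal
    (a : ℕ → ℝ) (ha0 : ∀ n, 0 < a n) (ha1 : ∀ n, a n < 1)
    (n₀ : ℕ) (θ : ℝ) (hθ0 : 0 < θ) (hθ1 : θ ≤ 1)
    (ν νθ : Measure (ℕ → ZMod 2)) [IsProbabilityMeasure ν] [IsProbabilityMeasure νθ]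
    -- ν = ⊗ ν_n with ν_n({0}) = a n, ν_n({1}) = 1 - a n
    (hν : ∀ (s : Finset ℕ) (v : ℕ → ZMod 2),
      ν {y | ∀ n ∈ s, y n = v n}
        = ∏ n ∈ s, ENNReal.ofReal (if v n = 0 then a n else 1 - a n))
    -- νθ = ⊗ ν^θ_n with ν^θ_n = ν_n for n ≠ n₀ and ν^θ_{n₀} = θ ν_{n₀} + (1-θ) δ₁
    (hνθ : ∀ (s : Finset ℕ) (v : ℕ → ZMod 2),
      νθ {y | ∀ n ∈ s, y n = v n}
        = ∏ n ∈ s, ENNReal.ofReal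
            (if n = n₀ then (if v n = 0 then θ * a n else 1 - θ * a n)
             else (if v n = 0 then a n else 1 - a n)))
    (ξ : (ℕ →₀ ZMod 2) → ℝ) (hξ : ∀ f, 0 ≤ ξ f) (hξ1 : ∑' f, ξ f = 1)
    -- the entropies are well defined (summability of the defining series)
    (hsum : Summable (fun f : ℕ →₀ ZMod 2 => ξ f *
      ∫ y, Real.log ((ν.map (fun y n => y n + f n)).rnDeriv ν y).toReal ∂ν))
    (hsumθ : Summable (fun f : ℕ →₀ ZMod 2 => ξ f *
      ∫ y, Real.log ((νθ.map (fun y n => y n + f n)).rnDeriv νθ y).toReal ∂νθ)) :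
    (-∑' f : ℕ →₀ ZMod 2, ξ f *
        ∫ y, Real.log ((ν.map (fun y n => y n + f n)).rnDeriv ν y).toReal ∂ν)
      - (-∑' f : ℕ →₀ ZMod 2, ξ f *
        ∫ y, Real.log ((νθ.map (fun y n => y n + f n)).rnDeriv νθ y).toReal ∂νθ)
      = (∑' f : ℕ →₀ ZMod 2, if f n₀ ≠ 0 then ξ f else 0) *
          ((1 - 2 * a n₀) * Real.log ((1 - a n₀) / a n₀)
            - (1 - 2 * (θ * a n₀)) * Real.log ((1 - θ * a n₀) / (θ * a n₀))) :=
  entropy_difference_of_modified_marginal_general a ha0 ha1 n₀ θ hθ0 hθ1 ν νθ hν hνθ ξ hsum hsumθ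
end
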